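/- arXiv:1908.00523 — 4 statements merged into one kernel-verified Lean document; each statement's English description precedes it below -/
import Mathlib

section
/- For K ≥ 2 a positive integer and all real r > 1, the value ρ(r) = (K·r³ + 3K(K−1)·r + K(K−1)(K−2)) / (r + K − 1)³ satisfies 1 < ρ(r) < K. -/
noncomputable def rho (K : ℕ) (r : ℝ) : ℝ :=
  ((K : ℝ) * r ^ 3 + 3 * K * (K - 1) * r + K * (K - 1) * (K - 2)) / (r + K - 1) ^ 3

theorem stmt_2 (K : ℕ) (hK : 2 ≤ K) (r : ℝ) (hr : 1 < r) :
    1 < rho K r ∧ rho K r < K := by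
  have hx : (2:ℝ) ≤ (K:ℝ) := by exact_mod_cast hK
  have hd : 0 < r + (K:ℝ) - 1 := by linarith
  have hd3 : 0 < (r + (K:ℝ) - 1)^3 := by positivity
  have hr1 : 0 < r - 1 := by linarith
  have hm : (1:ℝ) ≤ (K:ℝ) - 1 := by linarith
  unfold rho
  constructor
  · rw [lt_div_iff₀ hd3]
    nlinarith [mul_pos (mul_pos hr1 hr1) hr1, mul_pos (mul_pos (mul_pos hr1 hr1) hr1) (by linarith : (0:ℝ) < (K:ℝ) - 1)]
  · rw [div_lt_iff₀ hd3]
    nlinarith [mul_pos (mul_pos hd hd) (by linarith : (0:ℝ) < (K:ℝ) - 1),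
      mul_nonneg (mul_nonneg (by linarith : (0:ℝ) ≤ (K:ℝ)-1) (by linarith : (0:ℝ) ≤ r)) (by nlinarith : (0:ℝ) ≤ ((K:ℝ)-1)^2 - 1),
      sq_nonneg ((K:ℝ)-1), mul_pos hr1 hr1]
end

section
/- For K ≥ 2, the map from r ∈ (1, ∞) to ρ(r) = (K·r³ + 3K(K−1)·r + K(K−1)(K−2)) / (r + K − 1)³ is injective; consequently the in-out-ratio r is uniquely determined by the value of ρ. -/
/-! Substituting `t = K / (r + K - 1)` turns the numerator into a cube:
`ρ(r) = 1 + (K - 1) ((r - 1) / (r + K - 1))³`. Since the Möbius map `r ↦ (r - 1) / (r + K - 1)`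
is increasing on `r > 1 - K` and cubing is increasing, `ρ` is strictly increasing there for
`K ≥ 2`, hence injective on `(1, ∞)`. -/

open Set

theorem rho_eq_one_add (K : ℕ) {r : ℝ} (hr : r + K - 1 ≠ 0) :
    rho K r = 1 + (K - 1) * ((r - 1) / (r + K - 1)) ^ 3 := by
  unfold rho
  field_simp
  ring

theorem strictMonoOn_sub_div_add {a b : ℝ} (hab : 0 < a + b) :
    StrictMonoOn (fun x : ℝ => (x - a) / (x + b)) (Ioi (-b)) := by
  intro x hx y hy hxy
  have hx' : 0 < x + b := by simp only [mem_Ioi] at hx; linarith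
  have hy' : 0 < y + b := by simp only [mem_Ioi] at hy; linarith
  rw [div_lt_div_iff₀ hx' hy']
  nlinarith

theorem strictMonoOn_rho {K : ℕ} (hK : 2 ≤ K) :
    StrictMonoOn (rho K) (Ioi (1 - K)) := by
  have hK' : (1 : ℝ) < K := by exact_mod_cast hK
  have hmoebius : StrictMonoOn (fun r : ℝ => (r - 1) / (r + (K - 1))) (Ioi (1 - K)) := by
    simpa using strictMonoOn_sub_div_add (a := 1) (b := (K : ℝ) - 1) (by linarith)
  intro r hr s hs hrs
  have hden : ∀ x ∈ Ioi (1 - (K : ℝ)), x + K - 1 ≠ 0 := fun x hx => by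
    simp only [mem_Ioi] at hx; linarith
  rw [rho_eq_one_add K (hden r hr), rho_eq_one_add K (hden s hs)]
  have hcube := Odd.strictMono_pow (R := ℝ) (n := 3) (by decide) (hmoebius hr hs hrs)
  simp only [← add_sub_assoc] at hcube
  gcongr

theorem stmt_5 (K : ℕ) (hK : 2 ≤ K) :
    Set.InjOn (rho K) (Set.Ioi (1 : ℝ)) :=
  (strictMonoOn_rho hK).injOn.mono (Ioi_subset_Ioi (by simp))
end

section
/- Let K ≥ 2 and suppose ρ₁ = ρ(r₁) and ρ₂ = ρ(r₂) with ρ(r) = (Kr³ + 3K(K−1)r + K(K−1)(K−2))/(r+K−1)³ and r₁, r₂ > 1. Then r₁ = r₂ if and only if ρ₁ = ρ₂. -/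
theorem stmt_16 (K : ℕ) (hK : 2 ≤ K) (r₁ r₂ : ℝ) (h₁ : 1 < r₁) (h₂ : 1 < r₂) :
    r₁ = r₂ ↔ rho K r₁ = rho K r₂ := by
  constructor
  · intro h; rw [h]
  · intro h
    have hk : (2 : ℝ) ≤ (K : ℝ) := by exact_mod_cast hK
    set k : ℝ := (K : ℝ) with hkdef
    have hd1 : (0:ℝ) < r₁ + k - 1 := by linarith
    have hd2 : (0:ℝ) < r₂ + k - 1 := by linarith
    unfold rho at h
    rw [div_eq_div_iff (by positivity) (by positivity)] at h
    have hk1 : k - 1 ≠ 0 := by linarith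
    have key' : (k - 1) * ((r₁ - 1) * (r₂ + k - 1)) ^ 3 = (k - 1) * ((r₂ - 1) * (r₁ + k - 1)) ^ 3 := by
      linear_combination h
    have key : ((r₁ - 1) * (r₂ + k - 1)) ^ 3 = ((r₂ - 1) * (r₁ + k - 1)) ^ 3 :=
      mul_left_cancel₀ hk1 key'
    have ha : (0:ℝ) < (r₁ - 1) * (r₂ + k - 1) := mul_pos (by linarith) hd2
    have hb : (0:ℝ) < (r₂ - 1) * (r₁ + k - 1) := mul_pos (by linarith) hd1
    have hab : (r₁ - 1) * (r₂ + k - 1) = (r₂ - 1) * (r₁ + k - 1) := by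
      rcases lt_trichotomy ((r₁ - 1) * (r₂ + k - 1)) ((r₂ - 1) * (r₁ + k - 1)) with h' | h' | h'
      · exact absurd key (ne_of_lt (pow_lt_pow_left₀ h' ha.le (by norm_num)))
      · exact h'
      · exact absurd key (ne_of_gt (pow_lt_pow_left₀ h' hb.le (by norm_num)))
    have hk0 : k ≠ 0 := by linarith
    have : k * (r₁ - r₂) = 0 := by linear_combination hab
    have := mul_eq_zero.mp this
    rcases this with h' | h'
    · exact absurd h' hk0
    · linarith
end

section
/- Let K ≥ 2 and r > 1. Then ρ(r) − 1 = 3K(K−1)∫₁ʳ (s−1)²/(s+K−1)⁴ ds, and hence ρ(r) − 1 > 0 and lim_{r→1⁺} (ρ(r) − 1)/(r−1)³ = (K−1)/K³. -/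
lemma rho_sub_one (K : ℕ) (hK : 2 ≤ K) {r : ℝ} (hr : 1 < r) :
    rho K r - 1 = ((K : ℝ) - 1) * (r - 1) ^ 3 / (r + K - 1) ^ 3 := by
  have hK2 : (2 : ℝ) ≤ K := by exact_mod_cast hK
  have hd : (0 : ℝ) < r + K - 1 := by linarith
  have hd' : (r + (K : ℝ) - 1) ^ 3 ≠ 0 := by positivity
  unfold rho
  field_simp
  ring

theorem stmt_18 (K : ℕ) (hK : 2 ≤ K) :
    (∀ r : ℝ, 1 < r →
      rho K r - 1 =
        3 * K * ((K : ℝ) - 1) * ∫ s in (1 : ℝ)..r, (s - 1) ^ 2 / (s + K - 1) ^ 4) ∧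
    (∀ r : ℝ, 1 < r → 0 < rho K r - 1) ∧
    Filter.Tendsto (fun r : ℝ => (rho K r - 1) / (r - 1) ^ 3)
      (nhdsWithin 1 (Set.Ioi 1)) (nhds (((K : ℝ) - 1) / (K : ℝ) ^ 3)) := by
  have hK2 : (2 : ℝ) ≤ K := by exact_mod_cast hK
  refine ⟨?_, ?_, ?_⟩
  · intro r hr
    have huIcc : Set.uIcc (1 : ℝ) r = Set.Icc 1 r := Set.uIcc_of_le hr.le
    have hpos : ∀ x ∈ Set.uIcc (1 : ℝ) r, (0 : ℝ) < x + K - 1 := by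
      intro x hx
      rw [huIcc] at hx
      have := hx.1
      linarith
    have hderiv : ∀ x ∈ Set.uIcc (1 : ℝ) r,
        HasDerivAt (fun s : ℝ => (s - 1) ^ 3 / (3 * K * (s + K - 1) ^ 3))
          ((x - 1) ^ 2 / (x + K - 1) ^ 4) x := by
      intro x hx
      have hdx : (0 : ℝ) < x + K - 1 := hpos x hx
      have hu : HasDerivAt (fun s : ℝ => (s - 1) ^ 3) (3 * (x - 1) ^ 2) x := by
        have h1 : HasDerivAt (fun s : ℝ => s - 1) 1 x :=
          (hasDerivAt_id x).sub_const 1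
        have := h1.fun_pow 3
        simpa using this
      have hv : HasDerivAt (fun s : ℝ => 3 * K * (s + K - 1) ^ 3)
          (3 * K * (3 * (x + K - 1) ^ 2)) x := by
        have h1 : HasDerivAt (fun s : ℝ => s + K - 1) 1 x := by
          simpa [add_sub_assoc] using ((hasDerivAt_id x).add_const ((K : ℝ) - 1))
        have := (h1.fun_pow 3).const_mul (3 * (K : ℝ))
        simpa [mul_comm, mul_assoc, mul_left_comm] using this
      have hvne : 3 * (K : ℝ) * (x + K - 1) ^ 3 ≠ 0 := by positivity
      have := hu.fun_div hv hvne
      refine this.congr_deriv ?_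
      have h4 : (x + (K : ℝ) - 1) ^ 4 ≠ 0 := by positivity
      field_simp
      ring
    have hcont : IntervalIntegrable (fun s : ℝ => (s - 1) ^ 2 / (s + K - 1) ^ 4)
        MeasureTheory.volume 1 r := by
      apply ContinuousOn.intervalIntegrable
      apply ContinuousOn.div
      · fun_prop
      · fun_prop
      · intro x hx
        have := hpos x hx
        positivity
    have hint := intervalIntegral.integral_eq_sub_of_hasDerivAt hderiv hcont
    rw [hint, rho_sub_one K hK hr]
    have hd : (0 : ℝ) < r + K - 1 := by linarith
    have hKpos : (0 : ℝ) < K := by linarith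
    field_simp
    ring
  · intro r hr
    rw [rho_sub_one K hK hr]
    have hd : (0 : ℝ) < r + K - 1 := by linarith
    have h1 : (0 : ℝ) < (K : ℝ) - 1 := by linarith
    have h2 : (0 : ℝ) < r - 1 := by linarith
    positivity
  · have hKpos : (0 : ℝ) < K := by linarith
    have hlim : Filter.Tendsto (fun r : ℝ => ((K : ℝ) - 1) / (r + K - 1) ^ 3)
        (nhdsWithin 1 (Set.Ioi 1)) (nhds (((K : ℝ) - 1) / (K : ℝ) ^ 3)) := by
      have hc : ContinuousAt (fun r : ℝ => ((K : ℝ) - 1) / (r + K - 1) ^ 3) 1 := by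
        apply ContinuousAt.div
        · fun_prop
        · fun_prop
        · have : (1 : ℝ) + K - 1 = K := by ring
          simp only [this]
          positivity
      have := hc.continuousWithinAt (s := Set.Ioi 1)
      have h1 : ((1 : ℝ) + K - 1) = (K : ℝ) := by ring
      simpa [ContinuousWithinAt, h1] using this
    apply hlim.congr'
    filter_upwards [self_mem_nhdsWithin] with r hr
    have hr' : (1 : ℝ) < r := hr
    rw [rho_sub_one K hK hr']
    have hd : (0 : ℝ) < r + K - 1 := by linarith
    have h2 : (0 : ℝ) < r - 1 := by linarith
    field_simp
end
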